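/- Let T ∈ (0,∞), d ∈ ℕ, let O ⊆ ℝ^d be an open set, let G : (0,T) × O × ℝ × ℝ^d × S_d → ℝ be degenerate elliptic, and let u : [0,T] × O → ℝ be upper semicontinuous such that the restriction of u to (0,T) × O is a viscosity subsolution of ∂u/∂t (t,x) − G(t,x, u(t,x), (∇_x u)(t,x), (Hess_x u)(t,x)) = 0. Assume that lim_{n→∞} [ sup { u(t,x) : t ∈ [0,T], x ∈ O with dist(x, ℝ^d∖O) < 1/n or ‖x‖ > n } ] ≤ 0, that G(t,x,r,0,0) ≤ 0 for all (t,x,r) ∈ (0,T) × O × (0,∞), and that u(0,x) ≤ 0 for all x ∈ O. Then u(t,x) ≤ 0 for all (t,x) ∈ [0,T) × O. -/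

import Mathlib

open Real

/-- The time derivative `∂φ/∂t` of a function `φ : ℝ × ℝ^d → ℝ` of time and space. -/
noncomputable def timeDeriv {d : ℕ} (φ : ℝ × EuclideanSpace ℝ (Fin d) → ℝ)
    (y : ℝ × EuclideanSpace ℝ (Fin d)) : ℝ :=
  fderiv ℝ φ y (1, 0)

/-- The spatial gradient `∇ₓφ` of a function `φ : ℝ × ℝ^d → ℝ` of time and space. -/
noncomputable def spaceGrad {d : ℕ} (φ : ℝ × EuclideanSpace ℝ (Fin d) → ℝ)
    (y : ℝ × EuclideanSpace ℝ (Fin d)) : EuclideanSpace ℝ (Fin d) :=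
  WithLp.toLp 2 (fun i => fderiv ℝ φ y (0, EuclideanSpace.single i 1))

/-- The spatial Hessian `Hessₓφ` of a function `φ : ℝ × ℝ^d → ℝ` of time and space. -/
noncomputable def spaceHess {d : ℕ} (φ : ℝ × EuclideanSpace ℝ (Fin d) → ℝ)
    (y : ℝ × EuclideanSpace ℝ (Fin d)) : Matrix (Fin d) (Fin d) ℝ :=
  Matrix.of fun i j =>
    fderiv ℝ (fun z => fderiv ℝ φ z (0, EuclideanSpace.single j 1)) y
      (0, EuclideanSpace.single i 1)

/-- `G : (0,T) × O × ℝ × ℝ^d × S_d → ℝ` is degenerate elliptic if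
`G(t,x,r,p,A) ≤ G(t,x,r,p,B)` whenever `A ≤ B` (i.e. `B - A` is positive
semidefinite). -/
def ParabolicDegenerateElliptic {d : ℕ} (T : ℝ) (O : Set (EuclideanSpace ℝ (Fin d)))
    (G : ℝ → EuclideanSpace ℝ (Fin d) → ℝ → EuclideanSpace ℝ (Fin d) →
      Matrix (Fin d) (Fin d) ℝ → ℝ) : Prop :=
  ∀ t ∈ Set.Ioo 0 T, ∀ x ∈ O, ∀ (r : ℝ) (p : EuclideanSpace ℝ (Fin d))
    (A B : Matrix (Fin d) (Fin d) ℝ),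
    A.IsSymm → B.IsSymm → (B - A).PosSemidef → G t x r p A ≤ G t x r p B

/-- `u : (0,T) × O → ℝ` is a viscosity subsolution of
`∂u/∂t − G(t, x, u, ∇ₓu, Hessₓu) = 0`, i.e. a viscosity subsolution of `F = 0` on the
open set `(0,T) × O ⊆ ℝ^{1+d}`, where `F((t,x), r, (q,p), M) = q − G(t,x,r,p,A)` and
only the time component `q` of the gradient variable, the space components `p`, and
the spatial block `A` of the Hessian variable `M` enter `F`: `u` is upper
semicontinuous on `(0,T) × O` and for every `C²` test function `φ` on `(0,T) × O`
with `φ(y) = u(y)` and `φ ≥ u`, `∂φ/∂t(y) − G(y, φ(y), ∇ₓφ(y), Hessₓφ(y)) ≤ 0`. -/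
def IsParabolicViscositySubsolution {d : ℕ} (T : ℝ)
    (O : Set (EuclideanSpace ℝ (Fin d)))
    (G : ℝ → EuclideanSpace ℝ (Fin d) → ℝ → EuclideanSpace ℝ (Fin d) →
      Matrix (Fin d) (Fin d) ℝ → ℝ)
    (u : ℝ → EuclideanSpace ℝ (Fin d) → ℝ) : Prop :=
  UpperSemicontinuousOn (fun y : ℝ × EuclideanSpace ℝ (Fin d) => u y.1 y.2)
      (Set.Ioo 0 T ×ˢ O) ∧
    ∀ φ : ℝ × EuclideanSpace ℝ (Fin d) → ℝ, ContDiffOn ℝ 2 φ (Set.Ioo 0 T ×ˢ O) →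
      ∀ y ∈ Set.Ioo 0 T ×ˢ O, φ y = u y.1 y.2 →
        (∀ z ∈ Set.Ioo 0 T ×ˢ O, u z.1 z.2 ≤ φ z) →
          timeDeriv φ y - G y.1 y.2 (φ y) (spaceGrad φ y) (spaceHess φ y) ≤ 0

/-- `u : (0,T) × O → ℝ` is a viscosity supersolution of
`∂u/∂t − G(t, x, u, ∇ₓu, Hessₓu) = 0`; see `IsParabolicViscositySubsolution`. -/
def IsParabolicViscositySupersolution {d : ℕ} (T : ℝ)
    (O : Set (EuclideanSpace ℝ (Fin d)))
    (G : ℝ → EuclideanSpace ℝ (Fin d) → ℝ → EuclideanSpace ℝ (Fin d) →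
      Matrix (Fin d) (Fin d) ℝ → ℝ)
    (u : ℝ → EuclideanSpace ℝ (Fin d) → ℝ) : Prop :=
  LowerSemicontinuousOn (fun y : ℝ × EuclideanSpace ℝ (Fin d) => u y.1 y.2)
      (Set.Ioo 0 T ×ˢ O) ∧
    ∀ φ : ℝ × EuclideanSpace ℝ (Fin d) → ℝ, ContDiffOn ℝ 2 φ (Set.Ioo 0 T ×ˢ O) →
      ∀ y ∈ Set.Ioo 0 T ×ˢ O, φ y = u y.1 y.2 →
        (∀ z ∈ Set.Ioo 0 T ×ˢ O, φ z ≤ u z.1 z.2) →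
          0 ≤ timeDeriv φ y - G y.1 y.2 (φ y) (spaceGrad φ y) (spaceHess φ y)

/-- `u : (0,T) × O → ℝ` is a viscosity solution of
`∂u/∂t − G(t, x, u, ∇ₓu, Hessₓu) = 0` if it is both a viscosity subsolution and a
viscosity supersolution; see `IsParabolicViscositySubsolution`. -/
def IsParabolicViscositySolution {d : ℕ} (T : ℝ)
    (O : Set (EuclideanSpace ℝ (Fin d)))
    (G : ℝ → EuclideanSpace ℝ (Fin d) → ℝ → EuclideanSpace ℝ (Fin d) →
      Matrix (Fin d) (Fin d) ℝ → ℝ)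
    (u : ℝ → EuclideanSpace ℝ (Fin d) → ℝ) : Prop :=
  IsParabolicViscositySubsolution T O G u ∧ IsParabolicViscositySupersolution T O G u

open scoped ENNReal

/-! Suppose `u t₀ x₀ > 0`. Outside the compact core `[0,T] × K`, with `K` the complement of a
boundary layer of `O`, `u` is at most `u t₀ x₀ / 2`, so the penalised function
`u t x - δ / (T - t)` attains its maximum over `[0,T) × O` at some `y`. As `u 0 ≤ 0` and the
penalty is positive, `y` lies in `(0,T) × O`, and touching `u` from above at `y` by the time-only
test function `t ↦ u y + δ / (T - t) - δ / (T - y.1)` gives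
`0 < δ / (T - y.1)² ≤ G(y, u y, 0, 0) ≤ 0`. -/

open Set

theorem UpperSemicontinuousOn.exists_isMaxOn_of_forall_notMem_lt {α β : Type*}
    [TopologicalSpace α] [LinearOrder β] {f : α → β} {s k : Set α} (hk : IsCompact k)
    (hf : UpperSemicontinuousOn f k) {z₀ : α} (hz₀ : z₀ ∈ s)
    (hout : ∀ z ∈ s, z ∉ k → f z < f z₀) : ∃ y ∈ k, IsMaxOn f s y := by
  have hz₀k : z₀ ∈ k := by_contra fun h => lt_irrefl _ (hout z₀ hz₀ h)
  obtain ⟨y, hyk, hy⟩ := hf.exists_isMaxOn ⟨z₀, hz₀k⟩ hk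
  refine ⟨y, hyk, isMaxOn_iff.2 fun z hz => ?_⟩
  by_cases hzk : z ∈ k
  · exact hy hzk
  · exact ((hout z hz hzk).trans_le (hy hz₀k)).le

section BoundaryLayer

variable {E : Type*} [NormedAddCommGroup E] (O : Set E) (n : ℕ)

def boundaryLayer : Set E :=
  {x | Metric.infEDist x Oᶜ < (n : ℝ≥0∞)⁻¹ ∨ (n : ℝ) < ‖x‖}

theorem isOpen_boundaryLayer : IsOpen (boundaryLayer O n) :=
  (isOpen_lt Metric.continuous_infEDist continuous_const).union
    (isOpen_lt continuous_const continuous_norm)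

theorem compl_boundaryLayer_subset : (boundaryLayer O n)ᶜ ⊆ O := by
  intro x hx
  by_contra hxO
  refine hx (Or.inl ?_)
  rw [Metric.infEDist_zero_of_mem hxO]
  exact ENNReal.inv_pos.2 (ENNReal.natCast_ne_top n)

theorem isCompact_compl_boundaryLayer [ProperSpace E] : IsCompact (boundaryLayer O n)ᶜ := by
  refine (isCompact_closedBall (0 : E) n).of_isClosed_subset
    (isOpen_boundaryLayer O n).isClosed_compl fun x hx => ?_
  rw [mem_closedBall_zero_iff]
  exact not_lt.1 fun h => hx (Or.inr h)

end BoundaryLayer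

theorem exists_isMaxOn_sub_div_sub {E : Type*} [NormedAddCommGroup E] [ProperSpace E]
    {O : Set E} {T δ ε : ℝ} {n : ℕ} {u : ℝ → E → ℝ}
    (husc : UpperSemicontinuousOn (fun y : ℝ × E => u y.1 y.2) (Icc 0 T ×ˢ O))
    (hbd : ∀ t ∈ Icc 0 T, ∀ x ∈ O, x ∈ boundaryLayer O n → u t x ≤ ε)
    (hδ : 0 < δ) {t₀ : ℝ} {x₀ : E} (ht₀ : t₀ ∈ Ico 0 T) (hx₀ : x₀ ∈ O)
    (hε : ε < u t₀ x₀ - δ / (T - t₀)) :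
    ∃ y ∈ Ico 0 T ×ˢ O,
      IsMaxOn (fun z : ℝ × E => u z.1 z.2 - δ / (T - z.1)) (Ico 0 T ×ˢ O) y := by
  set K := (boundaryLayer O n)ᶜ
  set w := fun z : ℝ × E => u z.1 z.2 - δ / (T - z.1)
  have hbarrier : ∀ t < T, 0 < δ / (T - t) := fun t ht => div_pos hδ (sub_pos.2 ht)
  have hx₀K : x₀ ∈ K := fun h => by
    linarith [hbd t₀ (Ico_subset_Icc_self ht₀) x₀ hx₀ h, hbarrier t₀ ht₀.2]
  obtain ⟨M, hM⟩ := (husc.mono (prod_mono subset_rfl (compl_boundaryLayer_subset O n)))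
    |>.bddAbove_of_isCompact (isCompact_Icc.prod (isCompact_compl_boundaryLayer O n))
  have huM : ∀ t ∈ Icc 0 T, ∀ x ∈ K, u t x ≤ M := fun t ht x hx =>
    hM ⟨(t, x), ⟨ht, hx⟩, rfl⟩
  have hw₀M : w (t₀, x₀) < M := by
    linarith [huM t₀ (Ico_subset_Icc_self ht₀) x₀ hx₀K, hbarrier t₀ ht₀.2]
  -- beyond `T₁` the barrier alone pushes `w` below `w (t₀, x₀)` on `[0,T] × K`
  set T₁ := T - δ / (M - w (t₀, x₀))
  have hT₁ : T₁ < T := sub_lt_self T (div_pos hδ (sub_pos.2 hw₀M))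
  have hk : Icc 0 T₁ ×ˢ K ⊆ Ico 0 T ×ˢ O :=
    prod_mono (Icc_subset_Ico_right hT₁) (compl_boundaryLayer_subset O n)
  have hwk : UpperSemicontinuousOn w (Icc 0 T₁ ×ˢ K) := by
    simp only [w, sub_eq_add_neg]
    refine (husc.mono (hk.trans (prod_mono Ico_subset_Icc_self subset_rfl))).add
      (ContinuousOn.upperSemicontinuousOn ?_)
    exact (continuousOn_const.div (continuousOn_const.sub continuousOn_fst)
      fun z hz => (sub_pos.2 (hz.1.2.trans_lt hT₁)).ne').neg
  have hout : ∀ z ∈ Ico 0 T ×ˢ O, z ∉ Icc 0 T₁ ×ˢ K → w z < w (t₀, x₀) := by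
    rintro ⟨t, x⟩ ⟨ht, hx⟩ htx
    by_cases hxK : x ∈ K
    · have htT₁ : T₁ < t := not_le.1 fun h => htx ⟨⟨ht.1, h⟩, hxK⟩
      have : M - w (t₀, x₀) < δ / (T - t) := by
        rw [lt_div_iff₀ (sub_pos.2 ht.2), ← lt_div_iff₀' (sub_pos.2 hw₀M)]
        linarith
      linarith [huM t (Ico_subset_Icc_self ht) x hxK]
    · linarith [hbd t (Ico_subset_Icc_self ht) x hx (not_not.1 hxK), hbarrier t ht.2]
  obtain ⟨y, hyk, hy⟩ := hwk.exists_isMaxOn_of_forall_notMem_lt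
    (isCompact_Icc.prod (isCompact_compl_boundaryLayer O n)) (mk_mem_prod ht₀ hx₀) hout
  exact ⟨y, hk hyk, hy⟩

theorem fderiv_comp_fst_apply_mk_zero {𝕜 E F : Type*} [NontriviallyNormedField 𝕜]
    [NormedAddCommGroup E] [NormedSpace 𝕜 E] [NormedAddCommGroup F] [NormedSpace 𝕜 F]
    (f : 𝕜 → F) (z : 𝕜 × E) (v : E) :
    fderiv 𝕜 (fun w : 𝕜 × E => f w.1) z (0, v) = 0 := by
  by_cases h : DifferentiableAt 𝕜 (fun w : 𝕜 × E => f w.1) z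
  · rw [← h.lineDeriv_eq_fderiv]
    simp [lineDeriv]
  · rw [fderiv_zero_of_not_differentiableAt h, zero_apply]

theorem hasDerivAt_div_sub {δ T t : ℝ} (ht : t ≠ T) :
    HasDerivAt (fun s => δ / (T - s)) (δ / (T - t) ^ 2) t := by
  have h := (((hasDerivAt_id t).const_sub T).inv (sub_ne_zero.2 ht.symm)).const_mul δ
  simp only [id, neg_neg] at h
  simpa [div_eq_mul_inv] using h

section TimeOnly

variable {d : ℕ} (f : ℝ → ℝ) (y : ℝ × EuclideanSpace ℝ (Fin d))

theorem timeDeriv_comp_fst (hf : DifferentiableAt ℝ f y.1) :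
    timeDeriv (fun w => f w.1) y = deriv f y.1 := by
  change fderiv ℝ (f ∘ Prod.fst) y (1, 0) = _
  rw [(hf.hasDerivAt.comp_hasFDerivAt y hasFDerivAt_fst).fderiv]
  simp

theorem spaceGrad_comp_fst : spaceGrad (fun w => f w.1) y = 0 := by
  ext i
  simp [spaceGrad, fderiv_comp_fst_apply_mk_zero]

theorem spaceHess_comp_fst : spaceHess (fun w => f w.1) y = 0 := by
  ext i j
  simp [spaceHess, fderiv_comp_fst_apply_mk_zero]

end TimeOnly

theorem IsParabolicViscositySubsolution.deriv_le_of_isMaxOn_sub {d : ℕ} {T : ℝ}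
    {O : Set (EuclideanSpace ℝ (Fin d))}
    {G : ℝ → EuclideanSpace ℝ (Fin d) → ℝ → EuclideanSpace ℝ (Fin d) →
      Matrix (Fin d) (Fin d) ℝ → ℝ}
    {u : ℝ → EuclideanSpace ℝ (Fin d) → ℝ} (hsub : IsParabolicViscositySubsolution T O G u)
    {f : ℝ → ℝ} (hf : ContDiffOn ℝ 2 f (Ioo 0 T)) {y : ℝ × EuclideanSpace ℝ (Fin d)}
    (hy : y ∈ Ioo 0 T ×ˢ O)
    (hmax : IsMaxOn (fun z => u z.1 z.2 - f z.1) (Ioo 0 T ×ˢ O) y) :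
    deriv f y.1 ≤ G y.1 y.2 (u y.1 y.2) 0 0 := by
  set g := fun t => u y.1 y.2 - f y.1 + f t
  have hgy : g y.1 = u y.1 y.2 := by ring
  have hug : ∀ z ∈ Ioo 0 T ×ˢ O, u z.1 z.2 ≤ g z.1 := fun z hz => by
    linarith [isMaxOn_iff.1 hmax z hz]
  have hg : ContDiffOn ℝ 2 (fun z : ℝ × EuclideanSpace ℝ (Fin d) => g z.1)
      (Ioo 0 T ×ˢ O) :=
    (contDiffOn_const.add hf).comp contDiffOn_fst fun z hz => hz.1
  have hf' : DifferentiableAt ℝ f y.1 :=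
    (hf.differentiableOn two_ne_zero).differentiableAt (Ioo_mem_nhds hy.1.1 hy.1.2)
  have := hsub.2 _ hg y hy hgy hug
  rw [timeDeriv_comp_fst g y (differentiableAt_const _ |>.add hf'), spaceGrad_comp_fst,
    spaceHess_comp_fst, hgy, deriv_const_add] at this
  linarith

theorem viscosity_subsolution_domination_general
    {d : ℕ} (T : ℝ)
    (O : Set (EuclideanSpace ℝ (Fin d)))
    (G : ℝ → EuclideanSpace ℝ (Fin d) → ℝ → EuclideanSpace ℝ (Fin d) →
      Matrix (Fin d) (Fin d) ℝ → ℝ)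
    (u : ℝ → EuclideanSpace ℝ (Fin d) → ℝ)
    (husc : UpperSemicontinuousOn (fun y : ℝ × EuclideanSpace ℝ (Fin d) => u y.1 y.2)
      (Set.Icc 0 T ×ˢ O))
    (hsub : IsParabolicViscositySubsolution T O G u)
    (hboundary : ∀ ε : ℝ, 0 < ε → ∃ n : ℕ, 1 ≤ n ∧ ∀ t ∈ Set.Icc 0 T, ∀ x ∈ O,
      (EMetric.infEdist x Oᶜ < (n : ℝ≥0∞)⁻¹ ∨ (n : ℝ) < ‖x‖) → u t x ≤ ε)
    (hG0 : ∀ t ∈ Set.Ioo 0 T, ∀ x ∈ O, ∀ r : ℝ, 0 < r → G t x r 0 0 ≤ 0)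
    (hinit : ∀ x ∈ O, u 0 x ≤ 0) :
    ∀ t ∈ Set.Ico 0 T, ∀ x ∈ O, u t x ≤ 0 := by
  intro t₀ ht₀ x₀ hx₀
  by_contra! hpos
  obtain ⟨n, -, hbd⟩ := hboundary (u t₀ x₀ / 2) (half_pos hpos)
  set δ := u t₀ x₀ * (T - t₀) / 4
  have hTt₀ : 0 < T - t₀ := sub_pos.2 ht₀.2
  have hδ : 0 < δ := by positivity
  have hw₀ : u t₀ x₀ - δ / (T - t₀) = 3 / 4 * u t₀ x₀ := by field_simp; ring
  obtain ⟨y, hy, hmax⟩ := exists_isMaxOn_sub_div_sub husc hbd hδ ht₀ hx₀ (by linarith)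
  have hwy : 3 / 4 * u t₀ x₀ ≤ u y.1 y.2 - δ / (T - y.1) :=
    hw₀ ▸ hmax (mk_mem_prod ht₀ hx₀)
  have hTy : 0 < T - y.1 := sub_pos.2 hy.1.2
  have hbarrier : 0 < δ / (T - y.1) := div_pos hδ hTy
  have hy₁ : 0 < y.1 := hy.1.1.lt_of_ne fun h => by
    linarith [hinit y.2 hy.2, show u y.1 y.2 = u 0 y.2 by rw [← h]]
  have hC2 : ContDiffOn ℝ 2 (fun t => δ / (T - t)) (Ioo 0 T) :=
    contDiffOn_const.div (contDiffOn_const.sub contDiffOn_id) fun t ht => (sub_pos.2 ht.2).ne'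
  have hderiv := hsub.deriv_le_of_isMaxOn_sub hC2 ⟨⟨hy₁, hy.1.2⟩, hy.2⟩
    (hmax.on_subset (prod_mono Ioo_subset_Ico_self subset_rfl))
  rw [(hasDerivAt_div_sub hy.1.2.ne).deriv] at hderiv
  linarith [hG0 y.1 ⟨hy₁, hy.1.2⟩ y.2 hy.2 (u y.1 y.2) (by linarith), div_pos hδ (pow_pos hTy 2)]

/-- a domination result for viscosity subsolutions: let `u` be upper
semicontinuous on `[0,T] × O` whose restriction to `(0,T) × O` is a viscosity
subsolution of `∂u/∂t − G(t,x,u,∇ₓu,Hessₓu) = 0`, where `G` is degenerate elliptic.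
If `lim_{n→∞} sup { u(t,x) : t ∈ [0,T], x ∈ O near ∂O or with ‖x‖ > n } ≤ 0`,
`G(t,x,r,0,0) ≤ 0` for all `r > 0`, and `u(0,·) ≤ 0` on `O`, then `u ≤ 0` on
`[0,T) × O`. -/
theorem viscosity_subsolution_domination
    {d : ℕ} (hd : 0 < d) (T : ℝ) (hT : 0 < T)
    (O : Set (EuclideanSpace ℝ (Fin d))) (hO : IsOpen O)
    (G : ℝ → EuclideanSpace ℝ (Fin d) → ℝ → EuclideanSpace ℝ (Fin d) →
      Matrix (Fin d) (Fin d) ℝ → ℝ)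
    (hG : ParabolicDegenerateElliptic T O G)
    (u : ℝ → EuclideanSpace ℝ (Fin d) → ℝ)
    (husc : UpperSemicontinuousOn (fun y : ℝ × EuclideanSpace ℝ (Fin d) => u y.1 y.2)
      (Set.Icc 0 T ×ˢ O))
    (hsub : IsParabolicViscositySubsolution T O G u)
    (hboundary : ∀ ε : ℝ, 0 < ε → ∃ n : ℕ, 1 ≤ n ∧ ∀ t ∈ Set.Icc 0 T, ∀ x ∈ O,
      (EMetric.infEdist x Oᶜ < (n : ℝ≥0∞)⁻¹ ∨ (n : ℝ) < ‖x‖) → u t x ≤ ε)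
    (hG0 : ∀ t ∈ Set.Ioo 0 T, ∀ x ∈ O, ∀ r : ℝ, 0 < r → G t x r 0 0 ≤ 0)
    (hinit : ∀ x ∈ O, u 0 x ≤ 0) :
    ∀ t ∈ Set.Ico 0 T, ∀ x ∈ O, u t x ≤ 0 :=
  viscosity_subsolution_domination_general T O G u husc hsub hboundary hG0 hinit
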